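/- arXiv:2401.11733 — 5 statements merged into one kernel-verified Lean document; each statement's English description precedes it below -/
import Mathlib

section
/- For complex numbers $c$ and $q$ with $|q| < 1$, the series $1 + \sum_{k=1}^{\infty} \frac{(-1)^k q^{k(k+1)/2} c^k}{(1-q)(1-q^2)\cdots(1-q^k)}$ converges and equals the infinite product $\prod_{k=1}^{\infty} (1 - c q^k)$. -/
open Finset Filter Topology

/-!
Write `F(x) = ∑ₖ (-1)ᵏ q^(k(k+1)/2) xᵏ / ((1-q)⋯(1-qᵏ))`. The recurrence between consecutive
terms gives the functional equation `F(x) = (1 - xq) F(xq)`, and iterating it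
`F(c) = (∏_{i<n} (1 - c q^(i+1))) F(c qⁿ)`. As `n → ∞`, `c qⁿ → 0`, so by dominated convergence
`F(c qⁿ) → F(0) = 1`, while the partial products converge to the infinite product.
-/

namespace EulerQSeries

/-- The `q`-Pochhammer symbol `(q; q)ₖ = (1 - q)(1 - q²)⋯(1 - qᵏ)`. -/
noncomputable def qPochhammer (q : ℂ) (k : ℕ) : ℂ := ∏ i ∈ range k, (1 - q ^ (i + 1))

noncomputable def eulerTerm (q x : ℂ) (k : ℕ) : ℂ :=
  (-1) ^ k * q ^ (k * (k + 1) / 2) * x ^ k / qPochhammer q k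

noncomputable def eulerSeries (q x : ℂ) : ℂ := ∑' k, eulerTerm q x k

lemma triangle_succ (k : ℕ) : (k + 1) * (k + 2) / 2 = k * (k + 1) / 2 + (k + 1) := by
  rw [show (k + 1) * (k + 2) = k * (k + 1) + (k + 1) * 2 by ring,
    Nat.add_mul_div_right _ _ two_pos]

variable {q : ℂ}

lemma one_sub_pow_succ_ne_zero (hq : ‖q‖ < 1) (i : ℕ) : 1 - q ^ (i + 1) ≠ 0 := by
  refine sub_ne_zero.2 fun h => ?_
  have : ‖q ^ (i + 1)‖ < 1 := by
    rw [norm_pow]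
    exact pow_lt_one₀ (norm_nonneg q) hq i.succ_ne_zero
  simp [← h] at this

lemma qPochhammer_ne_zero (hq : ‖q‖ < 1) (k : ℕ) : qPochhammer q k ≠ 0 :=
  prod_ne_zero_iff.2 fun i _ => one_sub_pow_succ_ne_zero hq i

lemma eulerTerm_zero_right (q x : ℂ) : eulerTerm q x 0 = 1 := by
  simp [eulerTerm, qPochhammer]

lemma eulerTerm_mul (q x y : ℂ) (k : ℕ) : eulerTerm q (x * y) k = eulerTerm q x k * y ^ k := by
  rw [eulerTerm, eulerTerm, mul_pow]
  ring

lemma continuous_eulerTerm (q : ℂ) (k : ℕ) : Continuous fun x => eulerTerm q x k := by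
  unfold eulerTerm
  fun_prop

lemma eulerTerm_succ (hq : ‖q‖ < 1) (x : ℂ) (k : ℕ) :
    eulerTerm q x (k + 1) = -x * q ^ (k + 1) / (1 - q ^ (k + 1)) * eulerTerm q x k := by
  have := qPochhammer_ne_zero hq k
  have := one_sub_pow_succ_ne_zero hq k
  rw [eulerTerm, eulerTerm, triangle_succ, qPochhammer, prod_range_succ, ← qPochhammer]
  field_simp
  ring

lemma eulerTerm_succ_eq_sub (hq : ‖q‖ < 1) (x : ℂ) (k : ℕ) :
    eulerTerm q x (k + 1) = eulerTerm q (x * q) (k + 1) - x * q * eulerTerm q (x * q) k := by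
  have := one_sub_pow_succ_ne_zero hq k
  rw [eulerTerm_mul, eulerTerm_mul, eulerTerm_succ hq]
  field_simp
  ring

lemma summable_eulerTerm (hq : ‖q‖ < 1) (x : ℂ) : Summable (eulerTerm q x) := by
  have hpow : Tendsto (fun k : ℕ => q ^ (k + 1)) atTop (𝓝 0) :=
    (tendsto_pow_atTop_nhds_zero_of_norm_lt_one hq).comp (tendsto_add_atTop_nat 1)
  have hratio : Tendsto (fun k : ℕ => ‖-x * q ^ (k + 1) / (1 - q ^ (k + 1))‖) atTop (𝓝 0) := by
    simpa using (((hpow.const_mul (-x)).div (tendsto_const_nhds.sub hpow)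
      (by simp)).norm)
  refine summable_of_ratio_norm_eventually_le (r := 1 / 2) (by norm_num) ?_
  filter_upwards [hratio.eventually_le_const (by norm_num : (0 : ℝ) < 1 / 2)] with k hk
  rw [eulerTerm_succ hq, norm_mul]
  exact mul_le_mul_of_nonneg_right hk (norm_nonneg _)

lemma eulerSeries_eq_mul (hq : ‖q‖ < 1) (x : ℂ) :
    eulerSeries q x = (1 - x * q) * eulerSeries q (x * q) := by
  have hs := summable_eulerTerm hq (x * q)
  have hs_succ := (summable_nat_add_iff 1).2 hs
  calc eulerSeries q x
      = 1 + ∑' k, (eulerTerm q (x * q) (k + 1) - x * q * eulerTerm q (x * q) k) := by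
        rw [eulerSeries, (summable_eulerTerm hq x).tsum_eq_zero_add, eulerTerm_zero_right,
          tsum_congr (eulerTerm_succ_eq_sub hq x)]
    _ = (1 + ∑' k, eulerTerm q (x * q) (k + 1)) - x * q * eulerSeries q (x * q) := by
        rw [hs_succ.tsum_sub (hs.mul_left _), tsum_mul_left, eulerSeries]
        ring
    _ = (1 - x * q) * eulerSeries q (x * q) := by
        rw [eulerSeries, hs.tsum_eq_zero_add, eulerTerm_zero_right]
        ring

lemma eulerSeries_eq_prod_mul (hq : ‖q‖ < 1) (x : ℂ) (n : ℕ) :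
    eulerSeries q x = (∏ i ∈ range n, (1 - x * q ^ (i + 1))) * eulerSeries q (x * q ^ n) := by
  induction n with
  | zero => simp
  | succ n ih =>
    rw [ih, prod_range_succ, pow_succ, ← mul_assoc, eulerSeries_eq_mul hq (x * q ^ n)]
    ring

lemma eulerSeries_zero_right (q : ℂ) : eulerSeries q 0 = 1 := by
  rw [eulerSeries, tsum_eq_single 0 fun k hk => by simp [eulerTerm, hk], eulerTerm_zero_right]

lemma tendsto_eulerSeries_mul_pow (hq : ‖q‖ < 1) (c : ℂ) :
    Tendsto (fun n : ℕ => eulerSeries q (c * q ^ n)) atTop (𝓝 1) := by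
  have hpow : Tendsto (fun n : ℕ => c * q ^ n) atTop (𝓝 0) := by
    simpa using (tendsto_pow_atTop_nhds_zero_of_norm_lt_one hq).const_mul c
  rw [← eulerSeries_zero_right q]
  refine tendsto_tsum_of_dominated_convergence (bound := fun k => ‖eulerTerm q c k‖)
    (summable_eulerTerm hq c).norm
    (fun k => ((continuous_eulerTerm q k).tendsto 0).comp hpow) (Eventually.of_forall ?_)
  intro n k
  rw [eulerTerm_mul, norm_mul, norm_pow, norm_pow]
  exact mul_le_of_le_one_right (norm_nonneg _)
    (pow_le_one₀ (by positivity) (pow_le_one₀ (norm_nonneg q) hq.le))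

lemma multipliable_one_sub_mul_pow (hq : ‖q‖ < 1) (c : ℂ) :
    Multipliable fun k : ℕ => 1 - c * q ^ (k + 1) := by
  refine multipliable_one_add_of_summable (f := fun k => -(c * q ^ (k + 1))) ?_
  simpa [pow_succ', mul_assoc] using
    ((summable_geometric_of_lt_one (norm_nonneg q) hq).mul_left (‖c‖ * ‖q‖))

lemma tprod_one_sub_mul_pow (hq : ‖q‖ < 1) (c : ℂ) :
    ∏' k : ℕ, (1 - c * q ^ (k + 1)) = eulerSeries q c := by
  have hlim := (multipliable_one_sub_mul_pow hq c).hasProd.tendsto_prod_nat.mul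
    (tendsto_eulerSeries_mul_pow hq c)
  simp_rw [mul_one, ← eulerSeries_eq_prod_mul hq] at hlim
  exact tendsto_nhds_unique hlim tendsto_const_nhds

end EulerQSeries

open EulerQSeries in
/-- Euler's identity: for complex `c`, `q` with `|q| < 1`, the series
`1 + ∑_{k≥1} (-1)^k q^(k(k+1)/2) c^k / ((1-q)⋯(1-q^k))` converges and equals
the infinite product `∏_{k≥1} (1 - c q^k)`. -/
theorem euler_q_series_identity (c q : ℂ) (hq : ‖q‖ < 1) :
    Summable (fun k : ℕ =>
      ((-1 : ℂ) ^ (k + 1) * q ^ ((k + 1) * (k + 2) / 2) * c ^ (k + 1)) /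
        ∏ i ∈ Finset.range (k + 1), (1 - q ^ (i + 1))) ∧
    1 + ∑' k : ℕ,
      ((-1 : ℂ) ^ (k + 1) * q ^ ((k + 1) * (k + 2) / 2) * c ^ (k + 1)) /
        ∏ i ∈ Finset.range (k + 1), (1 - q ^ (i + 1)) =
      ∏' k : ℕ, (1 - c * q ^ (k + 1)) := by
  have hterm (k : ℕ) : ((-1 : ℂ) ^ (k + 1) * q ^ ((k + 1) * (k + 2) / 2) * c ^ (k + 1)) /
      ∏ i ∈ Finset.range (k + 1), (1 - q ^ (i + 1)) = eulerTerm q c (k + 1) := rfl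
  have hs := summable_eulerTerm hq c
  refine ⟨((summable_nat_add_iff 1).2 hs).congr fun k => (hterm k).symm, ?_⟩
  rw [tsum_congr hterm, tprod_one_sub_mul_pow hq, eulerSeries, hs.tsum_eq_zero_add,
    eulerTerm_zero_right]
end

section
/- Let $\alpha > 1$ be a real number. Then $1 + \sum_{k=1}^{\infty} \frac{2^k}{(1-\alpha)(1-\alpha^2)\cdots(1-\alpha^k)} = 0$ if and only if $\alpha = 2^{1/n}$ for some positive integer $n$. -/
/-!
Write `E(x) = ∑ xᵏ / (α; α)ₖ` with `(α; α)ₖ = (1 - α)(1 - α²)⋯(1 - αᵏ)`, so that the claim is about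
`E(2)`. Comparing coefficients gives the functional equation `E(αx) = (1 - x) E(x)`, and iterating it,
`E(x) = ∏_{j=1}^{m} (1 - x / αʲ) · E(x / αᵐ)`. Since `E` is continuous at `0` with `E(0) = 1`, the last
factor is nonzero for large `m`, so `E(x) = 0` exactly when `x = αʲ` for some `j ≥ 1`.
-/

open Finset Filter Topology

section QExp

variable {𝕜 : Type*} [NormedField 𝕜] {α : 𝕜}

noncomputable def qPochhammer (α : 𝕜) (k : ℕ) : 𝕜 := ∏ i ∈ range k, (1 - α ^ (i + 1))

noncomputable def qExp (α x : 𝕜) : 𝕜 := ∑' k, x ^ k / qPochhammer α k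

@[simp]
theorem qPochhammer_zero (α : 𝕜) : qPochhammer α 0 = 1 :=
  prod_range_zero _

theorem qPochhammer_succ (α : 𝕜) (k : ℕ) :
    qPochhammer α (k + 1) = qPochhammer α k * (1 - α ^ (k + 1)) :=
  prod_range_succ _ _

theorem one_sub_pow_ne_zero (hα : 1 < ‖α‖) {n : ℕ} (hn : n ≠ 0) : 1 - α ^ n ≠ 0 := by
  refine sub_ne_zero.2 fun h => ?_
  have : ‖α ^ n‖ = 1 := by rw [← h, norm_one]
  exact (one_lt_pow₀ hα hn).ne' (by rwa [norm_pow] at this)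

theorem qPochhammer_ne_zero (hα : 1 < ‖α‖) (k : ℕ) : qPochhammer α k ≠ 0 :=
  prod_ne_zero_iff.2 fun i _ => one_sub_pow_ne_zero hα i.succ_ne_zero

theorem pow_div_qPochhammer_succ (α x : 𝕜) (k : ℕ) :
    x ^ (k + 1) / qPochhammer α (k + 1) = x ^ k / qPochhammer α k * (x / (1 - α ^ (k + 1))) := by
  rw [qPochhammer_succ, div_mul_div_comm, pow_succ]

theorem summable_norm_pow_div_qPochhammer (hα : 1 < ‖α‖) (x : 𝕜) :
    Summable fun k => ‖x ^ k / qPochhammer α k‖ := by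
  refine summable_of_ratio_norm_eventually_le (r := 1 / 2) (by norm_num) ?_
  have hgrowth : Tendsto (fun k : ℕ => ‖α‖ ^ (k + 1)) atTop atTop :=
    (tendsto_pow_atTop_atTop_of_one_lt hα).comp (tendsto_add_atTop_nat 1)
  filter_upwards [hgrowth.eventually_ge_atTop (2 * ‖x‖ + 2)] with k hk
  have hden : 2 * ‖x‖ + 1 ≤ ‖1 - α ^ (k + 1)‖ := by
    have := norm_sub_norm_le (α ^ (k + 1)) 1
    rw [norm_pow, norm_one, norm_sub_rev] at this
    linarith
  have hratio : ‖x / (1 - α ^ (k + 1))‖ ≤ 1 / 2 := by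
    rw [norm_div, div_le_iff₀ (by linarith [norm_nonneg x])]
    linarith
  simp only [norm_norm, pow_div_qPochhammer_succ, norm_mul]
  nlinarith [norm_nonneg (x ^ k / qPochhammer α k)]

variable [CompleteSpace 𝕜]

theorem summable_pow_div_qPochhammer (hα : 1 < ‖α‖) (x : 𝕜) :
    Summable fun k => x ^ k / qPochhammer α k :=
  (summable_norm_pow_div_qPochhammer hα x).of_norm

theorem qExp_eq_one_add (hα : 1 < ‖α‖) (x : 𝕜) :
    qExp α x = 1 + ∑' k, x ^ (k + 1) / qPochhammer α (k + 1) := by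
  rw [qExp, (summable_pow_div_qPochhammer hα x).tsum_eq_zero_add, pow_zero, qPochhammer_zero, div_one]

theorem qExp_mul_left (hα : 1 < ‖α‖) (x : 𝕜) : qExp α (α * x) = (1 - x) * qExp α x := by
  have hs := summable_pow_div_qPochhammer hα x
  have hterm (k : ℕ) : (α * x) ^ (k + 1) / qPochhammer α (k + 1) =
      x ^ (k + 1) / qPochhammer α (k + 1) - x * (x ^ k / qPochhammer α k) := by
    have hP := qPochhammer_ne_zero hα k
    have hk := one_sub_pow_ne_zero hα k.succ_ne_zero
    rw [qPochhammer_succ, mul_pow]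
    field_simp
    ring
  rw [qExp_eq_one_add hα, funext hterm, ((summable_nat_add_iff 1).2 hs).tsum_sub (hs.mul_left x),
    tsum_mul_left, ← qExp, qExp_eq_one_add hα x]
  ring

theorem qExp_eq_prod_mul_qExp_div_pow (hα : 1 < ‖α‖) (x : 𝕜) (m : ℕ) :
    qExp α x = (∏ j ∈ range m, (1 - x / α ^ (j + 1))) * qExp α (x / α ^ m) := by
  induction m with
  | zero => simp
  | succ m ih =>
    have hα0 : α ≠ 0 := norm_pos_iff.1 (one_pos.trans hα)
    have hstep : qExp α (x / α ^ m) = (1 - x / α ^ (m + 1)) * qExp α (x / α ^ (m + 1)) := by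
      rw [← qExp_mul_left hα, pow_succ, ← div_div, mul_div_cancel₀ _ hα0]
    rw [ih, hstep, prod_range_succ, mul_assoc]

theorem tendsto_qExp_nhds_zero (hα : 1 < ‖α‖) : Tendsto (qExp α) (𝓝 0) (𝓝 1) := by
  have hbound : ∀ᶠ x in 𝓝 (0 : 𝕜), ∀ k, ‖x ^ k / qPochhammer α k‖ ≤ ‖1 ^ k / qPochhammer α k‖ := by
    filter_upwards [Metric.closedBall_mem_nhds (0 : 𝕜) one_pos] with x hx k
    rw [mem_closedBall_zero_iff] at hx
    rw [norm_div, norm_div, norm_pow, norm_pow, norm_one, one_pow]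
    gcongr
    exact pow_le_one₀ (norm_nonneg x) hx
  have h := tendsto_tsum_of_dominated_convergence (summable_norm_pow_div_qPochhammer hα 1)
    (fun k => ((continuous_pow k).tendsto 0).div_const (qPochhammer α k)) hbound
  rwa [tsum_eq_single 0 fun k hk => by simp [hk], pow_zero, qPochhammer_zero, div_one] at h

theorem eventually_qExp_div_pow_ne_zero (hα : 1 < ‖α‖) (x : 𝕜) :
    ∀ᶠ m in atTop, qExp α (x / α ^ m) ≠ 0 := by
  have hinv : ‖α⁻¹‖ < 1 := by rw [norm_inv]; exact inv_lt_one_of_one_lt₀ hα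
  have hlim : Tendsto (fun m : ℕ => x / α ^ m) atTop (𝓝 0) := by
    simpa [div_eq_mul_inv, inv_pow] using
      (tendsto_pow_atTop_nhds_zero_of_norm_lt_one hinv).const_mul x
  exact ((tendsto_qExp_nhds_zero hα).comp hlim).eventually_ne one_ne_zero

theorem qExp_eq_zero_iff (hα : 1 < ‖α‖) (x : 𝕜) : qExp α x = 0 ↔ ∃ j, 0 < j ∧ α ^ j = x := by
  have hα0 : α ≠ 0 := norm_pos_iff.1 (one_pos.trans hα)
  have hfactor (j : ℕ) : 1 - x / α ^ j = 0 ↔ α ^ j = x := by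
    rw [sub_eq_zero, eq_comm, div_eq_one_iff_eq (pow_ne_zero _ hα0), eq_comm]
  constructor
  · intro h
    obtain ⟨m, hm⟩ := (eventually_qExp_div_pow_ne_zero hα x).exists
    rw [qExp_eq_prod_mul_qExp_div_pow hα x m, mul_eq_zero, or_iff_left hm, prod_eq_zero_iff] at h
    obtain ⟨j, -, hj⟩ := h
    exact ⟨j + 1, j.succ_pos, (hfactor _).1 hj⟩
  · rintro ⟨j, hj, rfl⟩
    obtain ⟨i, rfl⟩ := Nat.exists_eq_succ_of_ne_zero hj.ne'
    rw [qExp_eq_prod_mul_qExp_div_pow hα _ (i + 1),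
      prod_eq_zero (mem_range.2 (Nat.lt_succ_self i)) ((hfactor _).2 rfl), zero_mul]

end QExp

/-- For real `α > 1`, `1 + ∑_{k≥1} 2^k / ((1-α)⋯(1-α^k)) = 0` iff
`α = 2^(1/n)` for some positive integer `n`. -/
theorem characteristic_values (α : ℝ) (hα : 1 < α) :
    1 + ∑' k : ℕ,
      (2 : ℝ) ^ (k + 1) / ∏ i ∈ Finset.range (k + 1), (1 - α ^ (i + 1)) = 0 ↔
    ∃ n : ℕ, 0 < n ∧ α = (2 : ℝ) ^ ((1 : ℝ) / n) := by
  have hα' : 1 < ‖α‖ := by rwa [Real.norm_of_nonneg (by linarith)]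
  have hseries : 1 + ∑' k : ℕ,
      (2 : ℝ) ^ (k + 1) / ∏ i ∈ Finset.range (k + 1), (1 - α ^ (i + 1)) = qExp α 2 := by
    rw [qExp_eq_one_add hα']
    rfl
  rw [hseries, qExp_eq_zero_iff hα']
  refine exists_congr fun n => and_congr_right fun hn => ?_
  rw [one_div, Real.eq_rpow_inv (by linarith) zero_le_two (by positivity), Real.rpow_natCast]
end

section
/- Let $\alpha > 1$ and define $E(t;\alpha) = e^{-t}\left(1 + \sum_{k=1}^{\infty} \frac{2^k e^{(1-\alpha^k)t}}{(1-\alpha)(1-\alpha^2)\cdots(1-\alpha^k)}\right)$ for $t \geq 0$. Then $E$ is differentiable on $(0,\infty)$ and satisfies the functional differential equation $E'(t;\alpha) + E(t;\alpha) = 2E(\alpha t;\alpha)$ for all $t > 0$. -/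
open Finset Real Filter Topology

/-!
Multiplying the series by `e^{-t}` turns `E` into the exponential series
`E(t) = ∑ cₙ e^{-αⁿ t}` with `c₀ = 1` and `cₙ₊₁ (1 - αⁿ⁺¹) = 2 cₙ`.
Since `|cₙ| ≤ (2/(α-1))ⁿ` while `e^{-αⁿ s}` decays doubly exponentially for `s > 0`,
the series and its termwise derivative converge locally uniformly on `(0, ∞)`.
Termwise, `(d/dt + 1)(cₙ e^{-αⁿ t}) = cₙ (1 - αⁿ) e^{-αⁿ t}`, which vanishes for `n = 0`
and, by the recursion, equals `2 cₙ₋₁ e^{-αⁿ⁻¹ (α t)}` for `n ≥ 1`: summing gives `2 E(α t)`.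
-/

theorem summable_pow_mul_exp_neg_pow_mul (r : ℝ) {α s : ℝ} (hα : 1 < α) (hs : 0 < s) :
    Summable fun n : ℕ => r ^ n * exp (-(α ^ n * s)) := by
  refine summable_of_ratio_norm_eventually_le (r := 1 / 2) (by norm_num) ?_
  have hdecay : Tendsto (fun n : ℕ => |r| * exp (-(α ^ n * ((α - 1) * s)))) atTop (𝓝 0) := by
    have := (tendsto_pow_atTop_atTop_of_one_lt hα).atTop_mul_const (mul_pos (sub_pos.2 hα) hs)
    simpa using (tendsto_exp_neg_atTop_nhds_zero.comp this).const_mul |r|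
  filter_upwards [hdecay.eventually_le_const (by norm_num : (0 : ℝ) < 1 / 2)] with n hn
  have hexp : exp (-(α ^ (n + 1) * s)) = exp (-(α ^ n * ((α - 1) * s))) * exp (-(α ^ n * s)) := by
    rw [← exp_add]; congr 1; ring
  have hratio : ‖r ^ (n + 1) * exp (-(α ^ (n + 1) * s))‖
      = |r| * exp (-(α ^ n * ((α - 1) * s))) * ‖r ^ n * exp (-(α ^ n * s))‖ := by
    rw [hexp]
    simp only [norm_mul, norm_pow, Real.norm_eq_abs, abs_exp, pow_succ]
    ring
  rw [hratio]
  exact mul_le_mul_of_nonneg_right hn (norm_nonneg _)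

theorem hasDerivAt_tsum_mul_exp_neg_mul {a ν : ℕ → ℝ} (hν : ∀ n, 0 ≤ ν n) {t₀ t : ℝ}
    (ht₀ : t₀ < t) (hbound : Summable fun n => a n * ν n * exp (-(ν n * t₀)))
    (hsum : Summable fun n => a n * exp (-(ν n * t))) :
    HasDerivAt (fun x => ∑' n, a n * exp (-(ν n * x)))
      (-∑' n, a n * ν n * exp (-(ν n * t))) t := by
  rw [← tsum_neg]
  refine hasDerivAt_tsum_of_isPreconnected (g := fun n x => a n * exp (-(ν n * x)))
    (g' := fun n x => -(a n * ν n * exp (-(ν n * x)))) (summable_abs_iff.2 hbound) isOpen_Ioi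
    isPreconnected_Ioi (fun n y _ => ?_) (fun n y hy => ?_) (Set.mem_Ioi.2 ht₀) hsum
    (Set.mem_Ioi.2 ht₀)
  · have hlin : HasDerivAt (fun x => -(ν n * x)) (-ν n) y := by
      simpa using ((hasDerivAt_id y).const_mul (ν n)).fun_neg
    exact (((hasDerivAt_exp _).comp y hlin).const_mul (a n)).congr_deriv (by ring)
  · have hexp : exp (-(ν n * y)) ≤ exp (-(ν n * t₀)) :=
      exp_le_exp.2 (neg_le_neg (mul_le_mul_of_nonneg_left (le_of_lt hy) (hν n)))
    simp only [norm_neg, Real.norm_eq_abs, abs_mul, abs_exp, abs_of_nonneg (hν n)]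
    exact mul_le_mul_of_nonneg_left hexp (mul_nonneg (abs_nonneg _) (hν n))

noncomputable def seriesCoeff (α : ℝ) (n : ℕ) : ℝ :=
  2 ^ n / ∏ i ∈ range n, (1 - α ^ (i + 1))

noncomputable def seriesSum (α x : ℝ) : ℝ :=
  ∑' n : ℕ, seriesCoeff α n * exp (-(α ^ n * x))

section

variable {α : ℝ}

theorem seriesCoeff_zero : seriesCoeff α 0 = 1 := by
  simp [seriesCoeff]

theorem one_sub_pow_succ_neg (hα : 1 < α) (i : ℕ) : 1 - α ^ (i + 1) < 0 :=
  sub_neg.2 (one_lt_pow₀ hα i.succ_ne_zero)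

theorem seriesCoeff_succ_mul (hα : 1 < α) (n : ℕ) :
    seriesCoeff α (n + 1) * (1 - α ^ (n + 1)) = 2 * seriesCoeff α n := by
  have hprod : ∏ i ∈ range n, (1 - α ^ (i + 1)) ≠ 0 :=
    prod_ne_zero_iff.2 fun i _ => (one_sub_pow_succ_neg hα i).ne
  simp only [seriesCoeff, prod_range_succ]
  field_simp [(one_sub_pow_succ_neg hα n).ne]
  ring

theorem abs_seriesCoeff_le (hα : 1 < α) (n : ℕ) : |seriesCoeff α n| ≤ (2 / (α - 1)) ^ n := by
  have hfactor : ∀ i ∈ range n, α - 1 ≤ |1 - α ^ (i + 1)| := fun i _ => by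
    rw [abs_of_neg (one_sub_pow_succ_neg hα i)]
    linarith [pow_le_pow_right₀ hα.le (Nat.le_add_left 1 i), pow_one α]
  have hprod : (α - 1) ^ n ≤ ∏ i ∈ range n, |1 - α ^ (i + 1)| := by
    simpa using prod_le_prod (fun _ _ => (sub_pos.2 hα).le) hfactor
  rw [seriesCoeff, abs_div, abs_prod, div_pow, abs_of_pos (by positivity : (0 : ℝ) < 2 ^ n)]
  exact div_le_div_of_nonneg_left (by positivity) (pow_pos (sub_pos.2 hα) n) hprod

theorem summable_seriesCoeff_mul_pow_mul_exp (hα : 1 < α) (k : ℕ) {s : ℝ} (hs : 0 < s) :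
    Summable fun n : ℕ => seriesCoeff α n * (α ^ n) ^ k * exp (-(α ^ n * s)) := by
  refine (summable_pow_mul_exp_neg_pow_mul (2 / (α - 1) * α ^ k) hα hs).of_norm_bounded
    fun n => ?_
  have hα₀ : 0 ≤ α := zero_le_one.trans hα.le
  simp only [norm_mul, norm_pow, Real.norm_eq_abs, abs_of_nonneg hα₀, abs_exp]
  rw [mul_pow, ← pow_mul, ← pow_mul, mul_comm k n]
  gcongr
  exact abs_seriesCoeff_le hα n

theorem seriesSum_sub_tsum_mul_pow (hα : 1 < α) {t : ℝ} (ht : 0 < t) :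
    seriesSum α t - ∑' n : ℕ, seriesCoeff α n * α ^ n * exp (-(α ^ n * t))
      = 2 * seriesSum α (α * t) := by
  have hsum := summable_seriesCoeff_mul_pow_mul_exp hα 0 ht
  have hderiv := summable_seriesCoeff_mul_pow_mul_exp hα 1 ht
  simp only [pow_zero, pow_one, mul_one] at hsum hderiv
  have hshift (n : ℕ) : seriesCoeff α (n + 1) * (1 - α ^ (n + 1)) * exp (-(α ^ (n + 1) * t))
      = 2 * (seriesCoeff α n * exp (-(α ^ n * (α * t)))) := by
    rw [seriesCoeff_succ_mul hα, pow_succ, mul_assoc (α ^ n)]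
    ring
  have hfactor (n : ℕ) : seriesCoeff α n * exp (-(α ^ n * t))
      - seriesCoeff α n * α ^ n * exp (-(α ^ n * t))
      = seriesCoeff α n * (1 - α ^ n) * exp (-(α ^ n * t)) := by
    ring
  have hdiff := (hsum.sub hderiv).congr hfactor
  rw [seriesSum, ← hsum.tsum_sub hderiv, tsum_congr hfactor, hdiff.tsum_eq_zero_add,
    tsum_congr hshift, tsum_mul_left, seriesSum]
  simp

theorem hasDerivAt_seriesSum (hα : 1 < α) {t : ℝ} (ht : 0 < t) :
    HasDerivAt (seriesSum α) (2 * seriesSum α (α * t) - seriesSum α t) t := by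
  have hderiv := hasDerivAt_tsum_mul_exp_neg_mul (a := seriesCoeff α)
    (fun n => pow_nonneg (zero_le_one.trans hα.le) n) (half_lt_self ht)
    (by simpa using summable_seriesCoeff_mul_pow_mul_exp hα 1 (half_pos ht))
    (by simpa using summable_seriesCoeff_mul_pow_mul_exp hα 0 ht)
  rw [← seriesSum_sub_tsum_mul_pow hα ht, sub_sub_cancel_left]
  exact hderiv

theorem exp_neg_mul_one_add_tsum_eq_seriesSum (hα : 1 < α) {x : ℝ} (hx : 0 < x) :
    exp (-x) * (1 + ∑' k : ℕ, 2 ^ (k + 1) * exp ((1 - α ^ (k + 1)) * x) /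
      ∏ i ∈ range (k + 1), (1 - α ^ (i + 1))) = seriesSum α x := by
  have hsum := summable_seriesCoeff_mul_pow_mul_exp hα 0 hx
  simp only [pow_zero, mul_one] at hsum
  have hterm (k : ℕ) : exp (-x) * (2 ^ (k + 1) * exp ((1 - α ^ (k + 1)) * x) /
      ∏ i ∈ range (k + 1), (1 - α ^ (i + 1)))
      = seriesCoeff α (k + 1) * exp (-(α ^ (k + 1) * x)) := by
    rw [seriesCoeff, show -(α ^ (k + 1) * x) = -x + (1 - α ^ (k + 1)) * x by ring, exp_add]
    ring
  rw [seriesSum, hsum.tsum_eq_zero_add, mul_add, mul_one, ← tsum_mul_left, tsum_congr hterm]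
  simp [seriesCoeff_zero]

end

/-- For `α > 1`, the series solution `E(t;α)` is differentiable on `(0,∞)` and
satisfies `E'(t) + E(t) = 2 E(α t)` for all `t > 0`. -/
theorem series_solution_satisfies_fde (α : ℝ) (hα : 1 < α)
    (E : ℝ → ℝ)
    (hE : ∀ t : ℝ, E t = Real.exp (-t) *
      (1 + ∑' k : ℕ,
        (2 : ℝ) ^ (k + 1) * Real.exp ((1 - α ^ (k + 1)) * t) /
          ∏ i ∈ Finset.range (k + 1), (1 - α ^ (i + 1)))) :
    ∀ t : ℝ, 0 < t → HasDerivAt E (2 * E (α * t) - E t) t := by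
  have hE_eq (x : ℝ) (hx : 0 < x) : E x = seriesSum α x :=
    (hE x).trans (exp_neg_mul_one_add_tsum_eq_seriesSum hα hx)
  intro t ht
  rw [hE_eq t ht, hE_eq (α * t) (mul_pos (zero_lt_one.trans hα) ht)]
  exact (hasDerivAt_seriesSum hα ht).congr_of_eventuallyEq
    (eventually_of_mem (Ioi_mem_nhds ht) hE_eq)
end

section
/- Let $\alpha > 0$, $j \geq 1$ an integer, and suppose $v : [0,\infty) \to \mathbb{R}$ is continuously differentiable, satisfies $v'(t) + v(t) = 2v(\alpha t) + v(\alpha t)^2$ for all $t > 0$, with $v(0) = 0$, $t^j v(t) \to 0$ as $t \to \infty$, and $t^j v$, $t^{j-1}v$, $t^j v^2$, and $t^j v'$ are integrable on $[0,\infty)$. Writing $\mu_j(f) = \int_0^\infty t^j f(t)\,dt$, we have $(\alpha^{j+1} - 2)\mu_j(v) - j\alpha^{j+1}\mu_{j-1}(v) - \mu_j(v^2) = 0$. -/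
/-!
Multiply the equation by `t ^ j` and integrate over `(0, ∞)`. Integration by parts turns
`μ_j(v')` into `-j μ_{j-1}(v)`, the boundary terms vanishing because `v 0 = 0` and
`t ^ j * v t → 0`; the substitution `t ↦ t / α` turns the moments of `v (α t)` and `v (α t) ^ 2`
into `α^{-(j+1)} μ_j(v)` and `α^{-(j+1)} μ_j(v²)`.
-/

open MeasureTheory Set Filter Topology

private lemma pow_mul_comp_mul_left_eq {α : ℝ} (hα : 0 < α) (j : ℕ) (g : ℝ → ℝ) (t : ℝ) :
    t ^ j * g (α * t) = (α⁻¹) ^ j * ((α * t) ^ j * g (α * t)) := by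
  rw [mul_pow, ← mul_assoc, ← mul_assoc, ← mul_pow, inv_mul_cancel₀ hα.ne', one_pow, one_mul]

theorem MeasureTheory.IntegrableOn.pow_mul_comp_mul_left_Ioi {α : ℝ} {j : ℕ} {g : ℝ → ℝ}
    (hg : IntegrableOn (fun t => t ^ j * g t) (Ioi 0)) (hα : 0 < α) :
    IntegrableOn (fun t => t ^ j * g (α * t)) (Ioi 0) := by
  have hdil : IntegrableOn (fun t => (α * t) ^ j * g (α * t)) (Ioi 0) :=
    (integrableOn_Ioi_comp_mul_left_iff (fun t => t ^ j * g t) 0 hα).mpr (by rwa [mul_zero])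
  have := hdil.const_mul ((α⁻¹) ^ j)
  simp only [← pow_mul_comp_mul_left_eq hα j g] at this
  exact this

theorem integral_Ioi_pow_mul_comp_mul_left {α : ℝ} (hα : 0 < α) (j : ℕ) (g : ℝ → ℝ) :
    ∫ t in Ioi 0, t ^ j * g (α * t) = (α ^ (j + 1))⁻¹ * ∫ t in Ioi 0, t ^ j * g t := by
  simp_rw [pow_mul_comp_mul_left_eq hα j g]
  rw [integral_const_mul, integral_comp_mul_left_Ioi (fun t => t ^ j * g t) 0 hα, mul_zero,
    smul_eq_mul, ← mul_assoc, pow_succ, mul_inv, inv_pow]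

/-- For `j = 0` the truncated exponent `j - 1 = 0` is harmless: that term carries the factor `j`. -/
theorem integral_Ioi_pow_mul_deriv_eq {v v' : ℝ → ℝ} (j : ℕ)
    (hcont : ContinuousWithinAt v (Ici 0) 0) (hderiv : ∀ x ∈ Ioi 0, HasDerivAt v (v' x) x)
    (h0 : v 0 = 0) (hlim : Tendsto (fun t => t ^ j * v t) atTop (𝓝 0))
    (hint : IntegrableOn (fun t => t ^ (j - 1) * v t) (Ioi 0))
    (hint' : IntegrableOn (fun t => t ^ j * v' t) (Ioi 0)) :
    ∫ t in Ioi 0, t ^ j * v' t = -(j * ∫ t in Ioi 0, t ^ (j - 1) * v t) := by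
  have hprod : ∫ t in Ioi 0, ((j : ℝ) * (t ^ (j - 1) * v t) + t ^ j * v' t) = 0 := by
    have := integral_Ioi_of_hasDerivAt_of_tendsto (f := fun t => t ^ j * v t)
      (f' := fun t => (j : ℝ) * (t ^ (j - 1) * v t) + t ^ j * v' t)
      ((continuous_pow j).continuousWithinAt.mul hcont)
      (fun x hx => by simpa only [mul_assoc] using (hasDerivAt_pow j x).fun_mul (hderiv x hx))
      ((hint.const_mul (j : ℝ)).add hint') hlim
    rwa [h0, mul_zero, sub_zero] at this
  rw [integral_add (hint.const_mul (j : ℝ)) hint', integral_const_mul] at hprod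
  linarith

theorem moment_identity_higher_general (α : ℝ) (hα : 0 < α) (j : ℕ)
    (v : ℝ → ℝ)
    (hv : ContDiff ℝ 1 v)
    (heq : ∀ t : ℝ, 0 < t → deriv v t + v t = 2 * v (α * t) + (v (α * t)) ^ 2)
    (h0 : v 0 = 0)
    (hlim : Tendsto (fun t => t ^ j * v t) atTop (nhds 0))
    (hintj : IntegrableOn (fun t => t ^ j * v t) (Ioi 0))
    (hintj1 : IntegrableOn (fun t => t ^ (j - 1) * v t) (Ioi 0))
    (hint2 : IntegrableOn (fun t => t ^ j * (v t) ^ 2) (Ioi 0))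
    (hint' : IntegrableOn (fun t => t ^ j * deriv v t) (Ioi 0)) :
    (α ^ (j + 1) - 2) * (∫ t in Ioi (0 : ℝ), t ^ j * v t) -
      (j : ℝ) * α ^ (j + 1) * (∫ t in Ioi (0 : ℝ), t ^ (j - 1) * v t) -
      (∫ t in Ioi (0 : ℝ), t ^ j * (v t) ^ 2) = 0 := by
  have hvd : Differentiable ℝ v := hv.differentiable one_ne_zero
  have hparts := integral_Ioi_pow_mul_deriv_eq j hvd.continuous.continuousWithinAt
    (fun x _ => (hvd x).hasDerivAt) h0 hlim hintj1 hint'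
  have hsq : IntegrableOn (fun t => t ^ j * v (α * t) ^ 2) (Ioi 0) :=
    hint2.pow_mul_comp_mul_left_Ioi hα
  have hmoment : ∫ t in Ioi 0, (t ^ j * deriv v t + t ^ j * v t)
      = ∫ t in Ioi 0, (2 * (t ^ j * v (α * t)) + t ^ j * v (α * t) ^ 2) :=
    setIntegral_congr_fun measurableSet_Ioi fun t ht => by
      linear_combination t ^ j * heq t ht
  rw [integral_add hint' hintj, integral_add
      ((hintj.pow_mul_comp_mul_left_Ioi hα).const_mul 2) hsq, integral_const_mul,
    integral_Ioi_pow_mul_comp_mul_left hα j v,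
    integral_Ioi_pow_mul_comp_mul_left hα j (fun x => v x ^ 2), hparts] at hmoment
  field_simp at hmoment
  linear_combination hmoment

/-- Multiplying the nonlinear equation by `t^j` and integrating over `[0,∞)` gives
`(α^{j+1} - 2) μ_j(v) - j α^{j+1} μ_{j-1}(v) - μ_j(v²) = 0`. -/
theorem moment_identity_higher (α : ℝ) (hα : 0 < α) (j : ℕ) (hj : 1 ≤ j)
    (v : ℝ → ℝ)
    (hv : ContDiff ℝ 1 v)
    (heq : ∀ t : ℝ, 0 < t → deriv v t + v t = 2 * v (α * t) + (v (α * t)) ^ 2)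
    (h0 : v 0 = 0)
    (hlim : Tendsto (fun t => t ^ j * v t) atTop (nhds 0))
    (hintj : IntegrableOn (fun t => t ^ j * v t) (Ioi 0))
    (hintj1 : IntegrableOn (fun t => t ^ (j - 1) * v t) (Ioi 0))
    (hint2 : IntegrableOn (fun t => t ^ j * (v t) ^ 2) (Ioi 0))
    (hint' : IntegrableOn (fun t => t ^ j * deriv v t) (Ioi 0)) :
    (α ^ (j + 1) - 2) * (∫ t in Ioi (0 : ℝ), t ^ j * v t) -
      (j : ℝ) * α ^ (j + 1) * (∫ t in Ioi (0 : ℝ), t ^ (j - 1) * v t) -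
      (∫ t in Ioi (0 : ℝ), t ^ j * (v t) ^ 2) = 0 :=
  moment_identity_higher_general α hα j v hv heq h0 hlim hintj hintj1 hint2 hint'
end

section
/- Suppose $\alpha > 0$, $n \geq 2$ is an integer with $\alpha^n = 2$, and $v_0 : [0,\infty) \to \mathbb{R}$ is continuously differentiable, satisfies $v_0'(t) + v_0(t) = 2 v_0(\alpha t)$ for $t > 0$ with $v_0(0) = 0$, and for all $0 \leq j \leq n-1$ the functions $t^j v_0$ and $t^j v_0'$ are integrable with $t^j v_0(t) \to 0$ as $t \to \infty$. Then $\int_0^\infty t^j v_0(t)\, dt = 0$ for all $0 \leq j \leq n-2$. -/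
open MeasureTheory Set Filter

/-!
Multiplying the equation by `t^j`, integrating over `(0, ∞)`, integrating the derivative term by
parts and rescaling `t ↦ α t` in the right-hand side gives, for the moments `μ_j = ∫₀^∞ t^j v₀`,
`(α^(j+1) - 2) μ_j = j α^(j+1) μ_{j-1}` whenever `1 ≤ j ≤ n - 1`. At `j = n - 1` the left side
vanishes because `α^n = 2`, so `μ_{n-2} = 0`, and the recurrence then propagates this down to `μ_0`.
-/

noncomputable def moment (f : ℝ → ℝ) (j : ℕ) : ℝ := ∫ t in Ioi 0, t ^ j * f t

theorem moment_comp_const_mul (f : ℝ → ℝ) (j : ℕ) {α : ℝ} (hα : 0 < α) :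
    moment (fun t => f (α * t)) j = (α ^ (j + 1))⁻¹ * moment f j := by
  have hscale : ∀ t : ℝ, t ^ j * f (α * t) = (α ^ j)⁻¹ * ((α * t) ^ j * f (α * t)) := fun t => by
    rw [mul_pow]
    field_simp
  simp only [moment, hscale, integral_const_mul,
    integral_comp_mul_left_Ioi (fun t => t ^ j * f t) 0 hα, mul_zero, smul_eq_mul]
  ring

theorem moment_succ_deriv {f : ℝ → ℝ} (hf : Differentiable ℝ f) {j : ℕ}
    (hint : IntegrableOn (fun t => t ^ j * f t) (Ioi 0))
    (hint' : IntegrableOn (fun t => t ^ (j + 1) * deriv f t) (Ioi 0))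
    (hlim : Tendsto (fun t => t ^ (j + 1) * f t) atTop (nhds 0)) :
    moment (deriv f) (j + 1) = -((j : ℝ) + 1) * moment f j := by
  have hpow : ∀ t : ℝ, HasDerivAt (fun t : ℝ => t ^ (j + 1)) (((j : ℝ) + 1) * t ^ j) t :=
    fun t => by simpa using hasDerivAt_pow (j + 1) t
  have hzero : Tendsto ((fun t : ℝ => t ^ (j + 1)) * f) (nhdsWithin 0 (Ioi 0)) (nhds 0) := by
    have hcont : Continuous ((fun t : ℝ => t ^ (j + 1)) * f) := (continuous_pow _).mul hf.continuous
    simpa using hcont.continuousWithinAt.tendsto (x := 0) (s := Ioi 0)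
  have hint_mul : IntegrableOn (fun t => ((j : ℝ) + 1) * t ^ j * f t) (Ioi 0) := by
    have h := hint.const_mul ((j : ℝ) + 1)
    simp only [← mul_assoc] at h
    exact h
  have hparts := integral_Ioi_mul_deriv_eq_deriv_mul (fun t _ => hpow t)
    (fun t _ => (hf t).hasDerivAt) hint' hint_mul hzero hlim
  simp only [mul_assoc, integral_const_mul] at hparts
  rw [moment, moment, hparts]
  ring

theorem moment_recurrence {f : ℝ → ℝ} (hf : Differentiable ℝ f) {α : ℝ} (hα : 0 < α)
    (heq : ∀ t : ℝ, 0 < t → deriv f t + f t = 2 * f (α * t)) {j : ℕ}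
    (hint : IntegrableOn (fun t => t ^ j * f t) (Ioi 0))
    (hint_succ : IntegrableOn (fun t => t ^ (j + 1) * f t) (Ioi 0))
    (hint' : IntegrableOn (fun t => t ^ (j + 1) * deriv f t) (Ioi 0))
    (hlim : Tendsto (fun t => t ^ (j + 1) * f t) atTop (nhds 0)) :
    (α ^ (j + 2) - 2) * moment f (j + 1) = ((j : ℝ) + 1) * α ^ (j + 2) * moment f j := by
  have hmoments : moment (deriv f) (j + 1) + moment f (j + 1)
      = 2 * moment (fun t => f (α * t)) (j + 1) := by
    rw [moment, moment, moment, ← integral_add hint' hint_succ, ← integral_const_mul]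
    refine setIntegral_congr_fun measurableSet_Ioi fun t ht => ?_
    linear_combination t ^ (j + 1) * heq t ht
  rw [moment_succ_deriv hf hint hint' hlim, moment_comp_const_mul f (j + 1) hα] at hmoments
  have hαpos : (0 : ℝ) < α ^ (j + 2) := pow_pos hα _
  field_simp at hmoments
  linear_combination hmoments

theorem lower_moments_vanish_general (α : ℝ) (hα : 0 < α) (n : ℕ) (hn : 2 ≤ n)
    (hαn : α ^ n = 2)
    (v₀ : ℝ → ℝ)
    (hv : ContDiff ℝ 1 v₀)
    (heq : ∀ t : ℝ, 0 < t → deriv v₀ t + v₀ t = 2 * v₀ (α * t))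
    (hint : ∀ j : ℕ, j ≤ n - 1 → IntegrableOn (fun t => t ^ j * v₀ t) (Ioi 0))
    (hint' : ∀ j : ℕ, j ≤ n - 1 → IntegrableOn (fun t => t ^ j * deriv v₀ t) (Ioi 0))
    (hlim : ∀ j : ℕ, j ≤ n - 1 → Tendsto (fun t => t ^ j * v₀ t) atTop (nhds 0)) :
    ∀ j : ℕ, j ≤ n - 2 → ∫ t in Ioi (0 : ℝ), t ^ j * v₀ t = 0 := by
  have hdiff : Differentiable ℝ v₀ := hv.differentiable one_ne_zero
  have hdown : ∀ j, j + 1 ≤ n - 1 →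
      (α ^ (j + 2) - 2) * moment v₀ (j + 1) = 0 → moment v₀ j = 0 := fun j hj hzero => by
    rw [moment_recurrence hdiff hα heq (hint j (by omega)) (hint (j + 1) hj) (hint' (j + 1) hj)
      (hlim (j + 1) hj)] at hzero
    have : ((j : ℝ) + 1) * α ^ (j + 2) ≠ 0 := by positivity
    exact (mul_eq_zero.mp hzero).resolve_left this
  have htop : moment v₀ (n - 2) = 0 :=
    hdown (n - 2) (by omega) (by rw [show n - 2 + 2 = n by omega, hαn, sub_self, zero_mul])
  intro j hj
  induction hj using Nat.decreasingInduction with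
  | self => exact htop
  | of_succ k hk hsucc =>
    change moment v₀ (k + 1) = 0 at hsucc
    exact hdown k (by omega) (by rw [hsucc, mul_zero])

/-- If `α^n = 2` with `n ≥ 2` and `v₀` is a suitably integrable solution of the
linear equation `v₀' + v₀ = 2 v₀(α·)` with `v₀(0) = 0`, then the moments
`∫₀^∞ t^j v₀(t) dt` vanish for `0 ≤ j ≤ n - 2`. -/
theorem lower_moments_vanish (α : ℝ) (hα : 0 < α) (n : ℕ) (hn : 2 ≤ n)
    (hαn : α ^ n = 2)
    (v₀ : ℝ → ℝ)
    (hv : ContDiff ℝ 1 v₀)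
    (heq : ∀ t : ℝ, 0 < t → deriv v₀ t + v₀ t = 2 * v₀ (α * t))
    (h0 : v₀ 0 = 0)
    (hint : ∀ j : ℕ, j ≤ n - 1 → IntegrableOn (fun t => t ^ j * v₀ t) (Ioi 0))
    (hint' : ∀ j : ℕ, j ≤ n - 1 → IntegrableOn (fun t => t ^ j * deriv v₀ t) (Ioi 0))
    (hlim : ∀ j : ℕ, j ≤ n - 1 → Tendsto (fun t => t ^ j * v₀ t) atTop (nhds 0)) :
    ∀ j : ℕ, j ≤ n - 2 → ∫ t in Ioi (0 : ℝ), t ^ j * v₀ t = 0 :=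
  lower_moments_vanish_general α hα n hn hαn v₀ hv heq hint hint' hlim
end
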